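/- arXiv:2208.03256 — 7 statements merged into one kernel-verified Lean document; each statement's English description precedes it below -/
import Mathlib

section
/- Let R be a commutative ring, let 0 ≤ r ≤ n, and let A be an r × n matrix over R with columns indexed by [n] = {1,…,n}. For J ⊆ [n] with |J| = r let A_J denote the r × r submatrix of A whose columns are those indexed by J, and set Δ(J) = det(A_J) for |J| = r and Δ(J) = 0 for |J| < r. Then for every (r+1)-element subset S ⊆ [n] and every (r−1)-element subset T ⊆ [n], the Grassmann–Plücker relation holds: Σ_{x ∈ S} sign(x; S, T) · Δ(S \ {x}) · Δ(T ∪ {x}) = 0. -/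
/-!
Write `T = {t₁ < ⋯ < t_{r-1}}`. The map `v ↦ det [v | A_T]` is a linear form `c ⬝ᵥ v` whose
coefficients are signed maximal minors of `A_T`. The `(r+1) × (r+1)` matrix whose first row is
`(c ⬝ᵥ a_s)_{s ∈ S}` and whose other rows are those of `A_S` is singular, its first row being the
combination `c` of the others; expanding it along the first row gives
`∑ⱼ (-1)ʲ (c ⬝ᵥ a_{sⱼ}) Δ(S \ {sⱼ}) = 0`. Finally `Δ(T ∪ {s})` is `det [a_s | A_T]` up to the sign
`(-1)^#{t ∈ T | t < s}` of moving `a_s` into sorted position, and together with the position of `s`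
in `S` this accounts for `sign(s; S, T)`; when `s ∈ T` both sides vanish.
-/

open Finset

def gpSign {n : ℕ} (x : Fin n) (S T : Finset (Fin n)) : ℤ :=
  (-1) ^ ((S.filter fun s => x < s).card + (T.filter fun t => x < t).card)

namespace Finset

variable {α : Type*} [LinearOrder α] {U : Finset α} {m : ℕ}

theorem card_filter_eq_card_filter_orderEmbOfFin (h : #U = m) (p : α → Prop) [DecidablePred p] :
    #{u ∈ U | p u} = #{i | p (U.orderEmbOfFin h i)} := by
  conv_lhs => rw [← U.map_orderEmbOfFin_univ h]
  rw [filter_map, card_map]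
  rfl

theorem card_filter_lt_orderEmbOfFin (h : #U = m) (j : Fin m) :
    #{u ∈ U | u < U.orderEmbOfFin h j} = j := by
  simp only [card_filter_eq_card_filter_orderEmbOfFin h, OrderEmbedding.lt_iff_lt,
    filter_gt_eq_Iio, Fin.card_Iio]

theorem card_filter_orderEmbOfFin_lt (h : #U = m) (j : Fin m) :
    #{u ∈ U | U.orderEmbOfFin h j < u} = m - 1 - j := by
  simp only [card_filter_eq_card_filter_orderEmbOfFin h, OrderEmbedding.lt_iff_lt,
    filter_lt_eq_Ioi, Fin.card_Ioi]

theorem card_filter_lt_add_card_filter_gt {x : α} (hx : x ∉ U) :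
    #{u ∈ U | u < x} + #{u ∈ U | x < u} = #U := by
  rw [← card_filter_add_card_filter_not (s := U) (· < x)]
  congr 1
  refine congrArg card (filter_congr fun u hu => ?_)
  exact ⟨fun h => not_lt.2 h.le,
    fun h => lt_of_le_of_ne (not_lt.1 h) (ne_of_mem_of_not_mem hu hx).symm⟩

theorem orderEmbOfFin_erase (h : #U = m + 1) (j : Fin (m + 1)) {V : Finset α} (hV : #V = m)
    (hUV : U.erase (U.orderEmbOfFin h j) = V) :
    ⇑(V.orderEmbOfFin hV) = U.orderEmbOfFin h ∘ j.succAbove := by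
  subst hUV
  refine (orderEmbOfFin_unique hV (fun i => ?_) ?_).symm
  · exact mem_erase.2 ⟨fun hij => Fin.succAbove_ne j i ((U.orderEmbOfFin h).injective hij),
      orderEmbOfFin_mem U h _⟩
  · exact (U.orderEmbOfFin h).strictMono.comp (Fin.strictMono_succAbove j)

theorem orderEmbOfFin_insert {x : α} (hx : x ∉ U) (h : #U = m) (h' : #(insert x U) = m + 1)
    (k : Fin (m + 1)) (hk : #{u ∈ U | u < x} = k) :
    ⇑((insert x U).orderEmbOfFin h') = Fin.insertNth k x (U.orderEmbOfFin h) := by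
  set g := (insert x U).orderEmbOfFin h'
  obtain ⟨k₀, hk₀⟩ : x ∈ Set.range g := by
    rw [range_orderEmbOfFin]; exact mem_coe.2 (mem_insert_self x U)
  obtain rfl : k₀ = k := by
    rw [Fin.ext_iff, ← hk, ← card_filter_lt_orderEmbOfFin h' k₀, hk₀, filter_insert,
      if_neg (lt_irrefl x)]
  rw [Fin.eq_insertNth_iff]
  exact ⟨hk₀, (orderEmbOfFin_erase h' k₀ h (by rw [hk₀, erase_insert hx])).symm⟩

end Finset

namespace Matrix

variable {R : Type*} [CommRing R] {m : ℕ}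

-- The generalized cross product of the columns of `B`: `signedMaximalMinors B ⬝ᵥ w` is the
-- determinant of `B` with `w` adjoined as first column.
def signedMaximalMinors (B : Matrix (Fin (m + 1)) (Fin m) R) : Fin (m + 1) → R :=
  fun i => (-1) ^ (i : ℕ) * (B.submatrix i.succAbove id).det

theorem det_submatrix_insertNth {ι : Type*} (A : Matrix (Fin (m + 1)) ι R) (f : Fin m → ι)
    (k : Fin (m + 1)) (x : ι) :
    (A.submatrix id (Fin.insertNth k x f)).det =
      (-1) ^ (k : ℕ) * (signedMaximalMinors (A.submatrix id f) ⬝ᵥ fun i => A i x) := by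
  rw [det_succ_column _ k, dotProduct, mul_sum]
  refine sum_congr rfl fun i _ => ?_
  simp only [signedMaximalMinors, submatrix_apply, id, Fin.insertNth_apply_same,
    submatrix_submatrix, Fin.insertNth_comp_succAbove, Function.comp_id, Function.id_comp, pow_add]
  ring

theorem signedMaximalMinors_dotProduct_column {ι : Type*} (A : Matrix (Fin (m + 1)) ι R)
    (f : Fin m → ι) (l : Fin m) :
    signedMaximalMinors (A.submatrix id f) ⬝ᵥ (fun i => A i (f l)) = 0 := by
  have h := det_submatrix_insertNth A f 0 (f l)
  rwa [det_zero_of_column_eq (Fin.succ_ne_zero l).symm (fun i => by simp), Fin.val_zero, pow_zero,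
    one_mul, eq_comm] at h

theorem sum_neg_one_pow_mul_vecMul_mul_det_submatrix_succAbove (c : Fin m → R)
    (B : Matrix (Fin m) (Fin (m + 1)) R) :
    ∑ j : Fin (m + 1), (-1) ^ (j : ℕ) * (c ᵥ* B) j * (B.submatrix id j.succAbove).det =
      0 := by
  set M : Matrix (Fin (m + 1)) (Fin (m + 1)) R := of (vecCons (c ᵥ* B) B)
  have hrow : M 0 = ∑ i, (Fin.cons 0 c : Fin (m + 1) → R) i • M i := by
    ext j
    simp only [M, Finset.sum_apply, Pi.smul_apply, of_apply, smul_eq_mul, Fin.sum_univ_succ,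
      Fin.cons_zero, zero_mul, Fin.cons_succ, zero_add]
    rfl
  have hdet : M.det = 0 := by
    simpa [← hrow] using det_updateRow_sum M 0 (Fin.cons 0 c)
  rw [← hdet, det_succ_row_zero]
  rfl

theorem det_submatrix_orderEmbOfFin_insert {α : Type*} [LinearOrder α]
    (A : Matrix (Fin (m + 1)) α R) {U : Finset α} {x : α} (hx : x ∉ U) (h : #U = m)
    (h' : #(insert x U) = m + 1) :
    (A.submatrix id ((insert x U).orderEmbOfFin h')).det =
      (-1) ^ #{u ∈ U | u < x} *
        (signedMaximalMinors (A.submatrix id (U.orderEmbOfFin h)) ⬝ᵥ fun i => A i x) := by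
  have hk : #{u ∈ U | u < x} < m + 1 := Nat.lt_succ_of_le (h ▸ card_filter_le U _)
  rw [orderEmbOfFin_insert hx h h' ⟨_, hk⟩ rfl, det_submatrix_insertNth]

end Matrix

theorem gpSign_orderEmbOfFin_mul_neg_one_pow {R : Type*} [Ring R] {n t : ℕ}
    {S T : Finset (Fin n)} (hS : #S = t + 2) (hT : #T = t) (j : Fin (t + 2))
    (hj : S.orderEmbOfFin hS j ∉ T) :
    (gpSign (S.orderEmbOfFin hS j) S T : R) * (-1) ^ #{u ∈ T | u < S.orderEmbOfFin hS j} =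
      -(-1) ^ (j : ℕ) := by
  have hS' := card_filter_orderEmbOfFin_lt hS j
  have hT' := card_filter_lt_add_card_filter_gt hj
  rw [gpSign, Int.cast_pow, Int.cast_neg, Int.cast_one, ← pow_add,
    neg_one_pow_congr (n := (j : ℕ) + 1), pow_succ, mul_neg_one]
  simp only [Nat.even_iff]
  omega

open Matrix

theorem gpSign_mul_mul_eq_neg_signedMaximalMinors {R : Type*} [CommRing R] {n t : ℕ}
    (A : Matrix (Fin (t + 1)) (Fin n) R) (Δ : Finset (Fin n) → R)
    (hΔdet : ∀ (J : Finset (Fin n)) (h : #J = t + 1),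
      Δ J = (A.submatrix id (J.orderEmbOfFin h)).det)
    {S T : Finset (Fin n)} (hΔT : Δ T = 0) (hS : #S = t + 2) (hT : #T = t) (j : Fin (t + 2)) :
    (gpSign (S.orderEmbOfFin hS j) S T : R) * Δ (S.erase (S.orderEmbOfFin hS j)) *
        Δ (insert (S.orderEmbOfFin hS j) T) =
      -((-1) ^ (j : ℕ) *
        (signedMaximalMinors (A.submatrix id (T.orderEmbOfFin hT)) ᵥ*
          A.submatrix id (S.orderEmbOfFin hS)) j *
        ((A.submatrix id (S.orderEmbOfFin hS)).submatrix id j.succAbove).det) := by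
  set x := S.orderEmbOfFin hS j
  set c := signedMaximalMinors (A.submatrix id (T.orderEmbOfFin hT))
  have hSx : #(S.erase x) = t + 1 := by
    rw [card_erase_of_mem (orderEmbOfFin_mem S hS j), hS]; rfl
  have hcol : (c ᵥ* A.submatrix id (S.orderEmbOfFin hS)) j = c ⬝ᵥ fun i => A i x := rfl
  rw [hΔdet _ hSx, orderEmbOfFin_erase hS j hSx rfl, hcol, submatrix_submatrix, Function.comp_id]
  by_cases hx : x ∈ T
  · obtain ⟨l, hl⟩ : x ∈ Set.range (T.orderEmbOfFin hT) := by
      rwa [range_orderEmbOfFin]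
    rw [insert_eq_of_mem hx, hΔT, ← hl, signedMaximalMinors_dotProduct_column]
    ring
  · have hTx : #(insert x T) = t + 1 := by rw [card_insert_of_notMem hx, hT]
    rw [hΔdet _ hTx, det_submatrix_orderEmbOfFin_insert A hx hT hTx]
    linear_combination (A.submatrix id (S.orderEmbOfFin hS ∘ j.succAbove)).det *
      (c ⬝ᵥ fun i => A i x) * gpSign_orderEmbOfFin_mul_neg_one_pow (R := R) hS hT j hx

theorem grassmann_plucker_relation_general {R : Type*} [CommRing R] {n r : ℕ}
    (A : Matrix (Fin r) (Fin n) R) (Δ : Finset (Fin n) → R)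
    (hΔdet : ∀ (J : Finset (Fin n)) (h : J.card = r),
      Δ J = (A.submatrix id (J.orderEmbOfFin h)).det)
    (hΔzero : ∀ J : Finset (Fin n), J.card < r → Δ J = 0)
    (S T : Finset (Fin n)) (hS : S.card = r + 1) (hT : T.card + 1 = r) :
    ∑ x ∈ S, (gpSign x S T : R) * Δ (S.erase x) * Δ (insert x T) = 0 := by
  obtain ⟨t, rfl⟩ : ∃ t, r = t + 1 := ⟨T.card, hT.symm⟩
  have ht : #T = t := by omega
  conv_lhs => enter [1]; rw [← map_orderEmbOfFin_univ S hS]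
  rw [sum_map]
  simp only [RelEmbedding.coe_toEmbedding,
    gpSign_mul_mul_eq_neg_signedMaximalMinors A Δ hΔdet (hΔzero T (by omega)) hS ht,
    sum_neg_distrib, sum_neg_one_pow_mul_vecMul_mul_det_submatrix_succAbove, neg_zero]

/-- The Grassmann–Plücker relations for the maximal minors of an `r × n` matrix over a
commutative ring. -/
theorem grassmann_plucker_relation {R : Type*} [CommRing R] {n r : ℕ} (hrn : r ≤ n)
    (A : Matrix (Fin r) (Fin n) R) (Δ : Finset (Fin n) → R)
    (hΔdet : ∀ (J : Finset (Fin n)) (h : J.card = r),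
      Δ J = (A.submatrix id (J.orderEmbOfFin h)).det)
    (hΔzero : ∀ J : Finset (Fin n), J.card < r → Δ J = 0)
    (S T : Finset (Fin n)) (hS : S.card = r + 1) (hT : T.card + 1 = r) :
    ∑ x ∈ S, (gpSign x S T : R) * Δ (S.erase x) * Δ (insert x T) = 0 :=
  grassmann_plucker_relation_general A Δ hΔdet hΔzero S T hS hT
end

section
/- Let P = (G, R) be a partial field, let 0 ≤ r ≤ n, and suppose p is a function assigning to each r-element subset J of [n] a value p(J) ∈ G ∪ {0}, not all zero, satisfying all Grassmann–Plücker equations over R. Then there exist a field k and a function q assigning to each r-element subset J of [n] a value q(J) ∈ k, not all zero, satisfying all Grassmann–Plücker equations over k, with the same support: {J : q(J) ≠ 0} = {J : p(J) ≠ 0}. In particular, every matroid representable over a partial field is representable over some field. -/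
open Finset

/-- `p` satisfies all Grassmann–Plücker equations of rank `r`. -/
def SatisfiesGP {k : Type*} [CommRing k] {n : ℕ} (r : ℕ) (p : Finset (Fin n) → k) : Prop :=
  ∀ S T : Finset (Fin n), S.card = r + 1 → T.card + 1 = r →
    ∑ x ∈ S, (gpSign x S T : k) * p (S.erase x) * p (insert x T) = 0

/-- `a` is an element of the partial field `(G, R)`, i.e. `a ∈ G ∪ {0}`. -/
def PFElem {R : Type*} [CommRing R] (G : Subgroup Rˣ) (a : R) : Prop :=
  a = 0 ∨ ∃ u : Rˣ, u ∈ G ∧ (u : R) = a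

/-!
Pull a maximal ideal `m` of `R` back along the evaluation map `ℤ[X_J] → R`, `X_J ↦ p J`,
and pass to the residue field of the resulting prime. The Grassmann–Plücker relations
hold there because they already hold in `R`, and the support is unchanged because the
nonzero values of `p` are units, which never lie in `m`. Working over `ℤ[X_J]` rather
than `R` keeps the field in `Type`.
-/

lemma PFElem.mem_iff_eq_zero {R : Type*} [CommRing R] {G : Subgroup Rˣ} {a : R}
    (ha : PFElem G a) {I : Ideal R} (hI : I ≠ ⊤) : a ∈ I ↔ a = 0 := by
  refine ⟨fun haI => ?_, fun h => h ▸ I.zero_mem⟩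
  obtain h | ⟨u, -, rfl⟩ := ha
  · exact h
  · exact absurd (I.eq_top_of_isUnit_mem haI u.isUnit) hI

lemma SatisfiesGP.comp_of_ker_le {A B C : Type*} [CommRing A] [CommRing B] [CommRing C]
    {n r : ℕ} {x : Finset (Fin n) → A} {f : A →+* B} {g : A →+* C}
    (hker : RingHom.ker f ≤ RingHom.ker g) (hf : SatisfiesGP r fun J => f (x J)) :
    SatisfiesGP r fun J => g (x J) := by
  intro S T hS hT
  have hrel : ∑ y ∈ S, (gpSign y S T : A) * x (S.erase y) * x (insert y T) ∈ RingHom.ker f := by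
    simpa [RingHom.mem_ker, map_sum] using hf S T hS hT
  simpa [RingHom.mem_ker, map_sum] using hker hrel

theorem plucker_vector_over_partial_field_to_field_general {R : Type*} [CommRing R]
    (G : Subgroup Rˣ) {n r : ℕ}
    (p : Finset (Fin n) → R)
    (hval : ∀ J : Finset (Fin n), PFElem G (p J))
    (hne : ∃ J : Finset (Fin n), p J ≠ 0)
    (hGP : SatisfiesGP r p) :
    ∃ (k : Type) (fld : Field k) (q : Finset (Fin n) → k),
      (∃ J : Finset (Fin n), q J ≠ 0) ∧
      (letI := fld; SatisfiesGP r q) ∧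
      (∀ J : Finset (Fin n), q J ≠ 0 ↔ p J ≠ 0) := by
  obtain ⟨J₀, hJ₀⟩ := hne
  have : Nontrivial R := nontrivial_of_ne _ _ hJ₀
  obtain ⟨m, hm⟩ := Ideal.exists_maximal R
  let φ : MvPolynomial (Finset (Fin n)) ℤ →+* R := MvPolynomial.eval₂Hom (Int.castRingHom R) p
  let P := m.comap φ
  let ψ := algebraMap (MvPolynomial (Finset (Fin n)) ℤ) P.ResidueField
  have hker : RingHom.ker φ ≤ RingHom.ker ψ := by
    rw [Ideal.ker_algebraMap_residueField]
    exact Ideal.comap_mono bot_le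
  have hsupp (J : Finset (Fin n)) : ψ (MvPolynomial.X J) = 0 ↔ p J = 0 := by
    rw [Ideal.algebraMap_residueField_eq_zero, Ideal.mem_comap, MvPolynomial.eval₂Hom_X',
      (hval J).mem_iff_eq_zero hm.ne_top]
  refine ⟨P.ResidueField, inferInstance, fun J => ψ (MvPolynomial.X J),
    ⟨J₀, (hsupp J₀).not.mpr hJ₀⟩, ?_, fun J => (hsupp J).not⟩
  exact SatisfiesGP.comp_of_ker_le hker (by simpa [φ] using hGP)

theorem plucker_vector_over_partial_field_to_field {R : Type*} [CommRing R]
    (G : Subgroup Rˣ) (hG : (-1 : Rˣ) ∈ G) {n r : ℕ} (hrn : r ≤ n)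
    (p : Finset (Fin n) → R)
    (hval : ∀ J : Finset (Fin n), PFElem G (p J))
    (hp0 : ∀ J : Finset (Fin n), J.card ≠ r → p J = 0)
    (hne : ∃ J : Finset (Fin n), p J ≠ 0)
    (hGP : SatisfiesGP r p) :
    ∃ (k : Type) (fld : Field k) (q : Finset (Fin n) → k),
      (∃ J : Finset (Fin n), q J ≠ 0) ∧
      (letI := fld; SatisfiesGP r q) ∧
      (∀ J : Finset (Fin n), q J ≠ 0 ↔ p J ≠ 0) :=
  plucker_vector_over_partial_field_to_field_general G p hval hne hGP
end

section
/- Let M be a matroid on ground set [n] and let 𝓑 be its collection of bases. Then 𝓑 is an orthogonal matroid on [n]: 𝓑 is nonempty, and for all bases B₁, B₂ of M and every x₁ ∈ B₁ Δ B₂, there exists x₂ ∈ B₁ Δ B₂ with x₂ ≠ x₁ such that B₁ Δ {x₁, x₂} is a basis of M. -/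
open Finset
open scoped symmDiff

/-- An orthogonal matroid on `[n]`: a nonempty collection `𝓑` of subsets of `[n]` satisfying
the symmetric exchange axiom. -/
def IsOrthogonalMatroid {n : ℕ} (𝓑 : Set (Finset (Fin n))) : Prop :=
  𝓑.Nonempty ∧
    ∀ B₁ ∈ 𝓑, ∀ B₂ ∈ 𝓑, ∀ x₁ ∈ B₁ ∆ B₂,
      ∃ x₂ ∈ B₁ ∆ B₂, x₂ ≠ x₁ ∧ B₁ ∆ ({x₁, x₂} : Finset (Fin n)) ∈ 𝓑

/-!
For `x₁ ∈ B₁ \ B₂` the basis exchange axiom gives `x₂ ∈ B₂ \ B₁` with `B₁ - x₁ + x₂` a basis,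
and `B₁ ∆ {x₁, x₂}` is exactly that set. For `x₁ ∈ B₂ \ B₁` one needs the reverse exchange
`B₁ + x₁ - x₂` with `x₂ ∈ B₁ \ B₂`, which is the exchange axiom of the dual matroid applied to
the complements `E \ B₁` and `E \ B₂`.
-/

theorem Set.symmDiff_pair_eq_insert_sdiff {α : Type*} {B : Set α} {x y : α}
    (hx : x ∈ B) (hy : y ∉ B) : B ∆ {x, y} = insert y (B \ {x}) := by
  ext z
  grind

namespace Matroid

variable {α : Type*} {M : Matroid α} {B₁ B₂ : Set α} {e : α}

theorem IsBase.rev_exchange (hB₁ : M.IsBase B₁) (hB₂ : M.IsBase B₂) (he : e ∈ B₂ \ B₁) :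
    ∃ f ∈ B₁ \ B₂, M.IsBase (insert e (B₁ \ {f})) := by
  have heE : e ∈ M.E := hB₂.subset_ground he.1
  obtain ⟨f, ⟨⟨hfE, hfB₂⟩, hf_compl⟩, hdual⟩ :=
    hB₁.compl_isBase_dual.exchange hB₂.compl_isBase_dual ⟨⟨heE, he.2⟩, fun h ↦ h.2 he.1⟩
  have hfB₁ : f ∈ B₁ := by_contra fun h ↦ hf_compl ⟨hfE, h⟩
  refine ⟨f, ⟨hfB₁, hfB₂⟩, ?_⟩
  convert hdual.compl_isBase_of_dual using 1
  have hB₁E := hB₁.subset_ground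
  ext z
  grind

theorem IsBase.exists_isBase_symmDiff_pair (hB₁ : M.IsBase B₁) (hB₂ : M.IsBase B₂)
    (hx : e ∈ B₁ ∆ B₂) : ∃ f ∈ B₁ ∆ B₂, f ≠ e ∧ M.IsBase (B₁ ∆ {e, f}) := by
  rcases hx with he | he
  · obtain ⟨f, hf, hB⟩ := hB₁.exchange hB₂ he
    refine ⟨f, Or.inr hf, (ne_of_mem_of_not_mem he.1 hf.2).symm, ?_⟩
    rwa [Set.symmDiff_pair_eq_insert_sdiff he.1 hf.2]
  · obtain ⟨f, hf, hB⟩ := hB₁.rev_exchange hB₂ he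
    refine ⟨f, Or.inl hf, ne_of_mem_of_not_mem he.1 hf.2 |>.symm, ?_⟩
    rwa [Set.pair_comm, Set.symmDiff_pair_eq_insert_sdiff hf.1 he.2]

end Matroid

theorem matroid_is_orthogonal_matroid_general {n : ℕ} (M : Matroid (Fin n)) :
    IsOrthogonalMatroid {J : Finset (Fin n) | M.IsBase ↑J} := by
  refine ⟨?_, fun B₁ hB₁ B₂ hB₂ x₁ hx₁ ↦ ?_⟩
  · obtain ⟨B, hB⟩ := M.exists_isBase
    exact ⟨B.toFinite.toFinset, by simpa using hB⟩
  have hx₁' : x₁ ∈ (B₁ : Set (Fin n)) ∆ B₂ := by rwa [← Finset.coe_symmDiff, Finset.mem_coe]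
  obtain ⟨x₂, hx₂, hne, hB⟩ := Matroid.IsBase.exists_isBase_symmDiff_pair hB₁ hB₂ hx₁'
  refine ⟨x₂, by rwa [← Finset.mem_coe, Finset.coe_symmDiff], hne, ?_⟩
  simpa only [Set.mem_ofPred_eq, Finset.coe_symmDiff, Finset.coe_pair] using hB

theorem matroid_is_orthogonal_matroid {n : ℕ} (M : Matroid (Fin n)) (hE : M.E = Set.univ) :
    IsOrthogonalMatroid {J : Finset (Fin n) | M.IsBase ↑J} :=
  matroid_is_orthogonal_matroid_general M
end

section
/- Let 𝓑 be an orthogonal matroid on [n]. Then 𝓑 satisfies the strong symmetric exchange axiom: for all B₁, B₂ ∈ 𝓑 and every x₁ ∈ B₁ Δ B₂, there exists x₂ ∈ B₁ Δ B₂ with x₂ ≠ x₁ such that both B₁ Δ {x₁, x₂} ∈ 𝓑 and B₂ Δ {x₁, x₂} ∈ 𝓑. -/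
open Finset
open scoped symmDiff

/-!
Call `y` a partner of `x` for `B` if `B ∆ {x, y} ∈ 𝓑`. An exchange `B ↦ B ∆ {x, y}` changes
`#(B₁ ∆ B₂)` by two and distance one admits no exchange, so all distances `#(B₁ ∆ B₂)` are even;
the strong exchange is proved by induction on this distance. At distance two the common partner of
`x` is the other element. At distance four, `B₁` and `B₂` each have two partners of `x` among the
three other elements, so they share one. At larger distance, take a partner `v` of `x` for `B₁` and
a partner `b` of `v` for `B₂`. Strong exchange between `B₁` and `B₂ ∆ {v, b}`, followed by strong
exchange between the resulting basis and `B₂` (at distance at most four), either yields a common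
partner or shows that `b` is a partner of `x` for `B₂` while some new partner `s` of `x` for `B₁`
has `B₂ ∆ {v, s} ∈ 𝓑`. Running this again with `s` in place of `b` makes `s` a common partner.
-/

section Exchange

variable {α : Type*} [DecidableEq α]

theorem card_symmDiff_pair_add_two {D : Finset α} {x y : α} (hx : x ∈ D) (hy : y ∈ D)
    (hxy : x ≠ y) : #(D ∆ {x, y}) + 2 = #D := by
  have hsub : ({x, y} : Finset α) ⊆ D := insert_subset hx (singleton_subset_iff.2 hy)
  rw [symmDiff_of_ge hsub, ← card_pair hxy, card_sdiff_add_card_eq_card hsub]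

theorem mem_symmDiff_pair {D : Finset α} {a b y : α} (ha : a ∈ D) (hb : b ∈ D) :
    y ∈ D ∆ {a, b} ↔ y ∈ D ∧ y ≠ a ∧ y ≠ b := by
  rw [symmDiff_of_ge (insert_subset ha (singleton_subset_iff.2 hb))]
  simp

theorem exists_eq_pair_of_card_eq_two {S : Finset α} {x : α} (hS : #S = 2) (hx : x ∈ S) :
    ∃ y ∈ S, y ≠ x ∧ S = {x, y} := by
  obtain ⟨y, hy⟩ := card_eq_one.1 (show #(S.erase x) = 1 by rw [card_erase_of_mem hx, hS])
  have hyS : y ∈ S.erase x := hy ▸ mem_singleton_self y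
  exact ⟨y, mem_of_mem_erase hyS, ne_of_mem_erase hyS, by rw [← hy, insert_erase hx]⟩

theorem pair_symmDiff_pair {a b c : α} (hab : a ≠ b) (hac : a ≠ c) (hbc : b ≠ c) :
    ({a, b} : Finset α) ∆ {a, c} = {b, c} := by
  ext i
  simp only [mem_symmDiff, mem_insert, mem_singleton]
  grind

def SymmetricExchange (𝓑 : Set (Finset α)) : Prop :=
  ∀ B₁ ∈ 𝓑, ∀ B₂ ∈ 𝓑, ∀ x ∈ B₁ ∆ B₂, ∃ y ∈ B₁ ∆ B₂, y ≠ x ∧ B₁ ∆ {x, y} ∈ 𝓑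

def IsCommonPartner (𝓑 : Set (Finset α)) (B₁ B₂ : Finset α) (x y : α) : Prop :=
  y ∈ B₁ ∆ B₂ ∧ y ≠ x ∧ B₁ ∆ {x, y} ∈ 𝓑 ∧ B₂ ∆ {x, y} ∈ 𝓑

variable {𝓑 : Set (Finset α)} {B₁ B₂ : Finset α} {x : α}

theorem IsCommonPartner.symm {y : α} (h : IsCommonPartner 𝓑 B₁ B₂ x y) :
    IsCommonPartner 𝓑 B₂ B₁ x y := by
  obtain ⟨hy, hyx, h₁, h₂⟩ := h
  exact ⟨symmDiff_comm B₁ B₂ ▸ hy, hyx, h₂, h₁⟩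

theorem exists_isCommonPartner_of_card_eq_two (hB₁ : B₁ ∈ 𝓑) (hB₂ : B₂ ∈ 𝓑)
    (hD : #(B₁ ∆ B₂) = 2) (hx : x ∈ B₁ ∆ B₂) : ∃ y, IsCommonPartner 𝓑 B₁ B₂ x y := by
  obtain ⟨y, hy, hyx, hpair⟩ := exists_eq_pair_of_card_eq_two hD hx
  refine ⟨y, hy, hyx, ?_, ?_⟩
  · rwa [← hpair, symmDiff_symmDiff_cancel_left]
  · rwa [← hpair, symmDiff_comm B₁, symmDiff_symmDiff_cancel_left]

theorem exists_isCommonPartner_or_of_exchange (hB₁ : B₁ ∈ 𝓑) (hB₂ : B₂ ∈ 𝓑)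
    (IH : ∀ C₁ ∈ 𝓑, ∀ C₂ ∈ 𝓑, #(C₁ ∆ C₂) < #(B₁ ∆ B₂) →
      ∀ y ∈ C₁ ∆ C₂, ∃ z, IsCommonPartner 𝓑 C₁ C₂ y z)
    (h5 : 5 ≤ #(B₁ ∆ B₂)) (hx : x ∈ B₁ ∆ B₂) {v b : α} (hv : v ∈ B₁ ∆ B₂) (hb : b ∈ B₁ ∆ B₂)
    (hvx : v ≠ x) (hbx : b ≠ x) (hbv : b ≠ v) (hv𝓑 : B₁ ∆ {x, v} ∈ 𝓑)
    (hb𝓑 : B₂ ∆ {v, b} ∈ 𝓑) :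
    (∃ y, IsCommonPartner 𝓑 B₁ B₂ x y) ∨
      B₂ ∆ {x, b} ∈ 𝓑 ∧ ∃ s ∈ B₁ ∆ B₂, s ≠ x ∧ s ≠ v ∧ B₁ ∆ {x, s} ∈ 𝓑 ∧ B₂ ∆ {v, s} ∈ 𝓑 := by
  have hD' : B₁ ∆ (B₂ ∆ {v, b}) = (B₁ ∆ B₂) ∆ {v, b} := (symmDiff_assoc _ _ _).symm
  have hcard := card_symmDiff_pair_add_two hv hb hbv.symm
  obtain ⟨s, hs, hsx, hs₁, hs₂⟩ := IH B₁ hB₁ _ hb𝓑 (by rw [hD']; omega) x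
    (hD' ▸ (mem_symmDiff_pair hv hb).2 ⟨hx, hvx.symm, hbx.symm⟩)
  obtain ⟨hsD, hsv, hsb⟩ := (mem_symmDiff_pair hv hb).1 (hD' ▸ hs)
  rw [symmDiff_assoc] at hs₂
  set Q : Finset α := {v, b} ∆ {x, s}
  have hQ : (B₂ ∆ Q) ∆ B₂ = Q := by rw [symmDiff_comm, symmDiff_symmDiff_cancel_left]
  have hQcard : #Q ≤ 4 := (card_le_card symmDiff_subset_union).trans
    ((card_union_le _ _).trans (add_le_add card_le_two card_le_two))
  have hxQ : x ∈ Q := by simp [Q, mem_symmDiff, hvx.symm, hbx.symm]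
  obtain ⟨q, hq, hqx, hq₁, hq₂⟩ := IH _ hs₂ B₂ hB₂ (by rw [hQ]; omega) x (by rwa [hQ])
  have hq' : q = v ∨ q = b ∨ q = s := by
    rw [hQ] at hq
    simp only [Q, mem_symmDiff, mem_insert, mem_singleton] at hq
    tauto
  rcases hq' with rfl | rfl | rfl
  · exact Or.inl ⟨q, hv, hvx, hv𝓑, hq₂⟩
  · have hvs : (B₂ ∆ Q) ∆ {x, q} = B₂ ∆ {v, s} := by
      rw [symmDiff_assoc, symmDiff_assoc, pair_symmDiff_pair hsx.symm hqx.symm hsb,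
        pair_comm v, pair_comm s, pair_symmDiff_pair hbv hsb.symm hsv.symm]
    exact Or.inr ⟨hq₂, s, hsD, hsx, hsv, hs₁, hvs ▸ hq₁⟩
  · exact Or.inl ⟨q, hsD, hsx, hs₁, hq₂⟩

namespace SymmetricExchange

theorem even_card_symmDiff (h : SymmetricExchange 𝓑) (hB₁ : B₁ ∈ 𝓑) (hB₂ : B₂ ∈ 𝓑) :
    Even #(B₁ ∆ B₂) := by
  induction hD : #(B₁ ∆ B₂) using Nat.strong_induction_on generalizing B₁ with
  | _ d IH =>
  obtain hempty | ⟨x, hx⟩ := (B₁ ∆ B₂).eq_empty_or_nonempty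
  · simp [← hD, hempty]
  obtain ⟨y, hy, hyx, hB₁'⟩ := h B₁ hB₁ B₂ hB₂ x hx
  have hcard := card_symmDiff_pair_add_two hx hy hyx.symm
  rw [← symmDiff_right_comm] at hcard
  rw [← hD, ← hcard]
  exact (IH _ (by omega) hB₁' rfl).add even_two

theorem exists_isCommonPartner_or_exchange (h : SymmetricExchange 𝓑) (hB₁ : B₁ ∈ 𝓑)
    (hB₂ : B₂ ∈ 𝓑) (hx : x ∈ B₁ ∆ B₂) :
    (∃ y, IsCommonPartner 𝓑 B₁ B₂ x y) ∨
      ∃ v ∈ B₁ ∆ B₂, ∃ t ∈ B₁ ∆ B₂,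
        v ≠ x ∧ t ≠ x ∧ t ≠ v ∧ B₁ ∆ {x, v} ∈ 𝓑 ∧ B₂ ∆ {v, t} ∈ 𝓑 := by
  obtain ⟨v, hv, hvx, hv𝓑⟩ := h B₁ hB₁ B₂ hB₂ x hx
  obtain ⟨t, ht, htv, ht𝓑⟩ := h B₂ hB₂ B₁ hB₁ v (symmDiff_comm B₁ B₂ ▸ hv)
  rw [symmDiff_comm] at ht
  by_cases htx : t = x
  · subst htx
    exact Or.inl ⟨v, hv, hvx, hv𝓑, by rwa [pair_comm]⟩
  · exact Or.inr ⟨v, hv, t, ht, hvx, htx, htv, hv𝓑, ht𝓑⟩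

theorem exists_isCommonPartner_or_two_partners (h : SymmetricExchange 𝓑)
    (hB₁ : B₁ ∈ 𝓑) (hB₂ : B₂ ∈ 𝓑)
    (hD : #(B₁ ∆ B₂) = 4) (hx : x ∈ B₁ ∆ B₂) :
    (∃ y, IsCommonPartner 𝓑 B₁ B₂ x y) ∨
      ∃ P ⊆ (B₁ ∆ B₂).erase x, #P = 2 ∧ ∀ y ∈ P, B₁ ∆ {x, y} ∈ 𝓑 := by
  obtain hy | ⟨v, hv, t, ht, hvx, htx, htv, hv𝓑, ht𝓑⟩ :=
    h.exists_isCommonPartner_or_exchange hB₁ hB₂ hx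
  · exact Or.inl hy
  have hx' : x ∈ (B₁ ∆ B₂) ∆ {v, t} := (mem_symmDiff_pair hv ht).2 ⟨hx, hvx.symm, htx.symm⟩
  obtain ⟨r, hr, hrx, hpair⟩ := exists_eq_pair_of_card_eq_two
    (by have := card_symmDiff_pair_add_two hv ht htv.symm; omega) hx'
  -- `B₂ ∆ {v, t} = B₁ ∆ ((B₁ ∆ B₂) ∆ {v, t}) = B₁ ∆ {x, r}`: a second partner of `x`.
  have hr𝓑 : B₁ ∆ {x, r} ∈ 𝓑 := by
    rwa [← hpair, ← symmDiff_assoc, symmDiff_symmDiff_cancel_left]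
  obtain ⟨hrD, hrv, -⟩ := (mem_symmDiff_pair hv ht).1 hr
  refine Or.inr ⟨{v, r}, ?_, card_pair hrv.symm, ?_⟩
  · exact insert_subset (mem_erase.2 ⟨hvx, hv⟩)
      (singleton_subset_iff.2 (mem_erase.2 ⟨hrx, hrD⟩))
  · simp only [mem_insert, mem_singleton, forall_eq_or_imp, forall_eq]
    exact ⟨hv𝓑, hr𝓑⟩

theorem exists_isCommonPartner_of_card_eq_four (h : SymmetricExchange 𝓑)
    (hB₁ : B₁ ∈ 𝓑) (hB₂ : B₂ ∈ 𝓑)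
    (hD : #(B₁ ∆ B₂) = 4) (hx : x ∈ B₁ ∆ B₂) : ∃ y, IsCommonPartner 𝓑 B₁ B₂ x y := by
  obtain hy | ⟨P₁, hP₁, hcard₁, hP₁𝓑⟩ :=
    h.exists_isCommonPartner_or_two_partners hB₁ hB₂ hD hx
  · exact hy
  rw [symmDiff_comm] at hD hx
  obtain hy | ⟨P₂, hP₂, hcard₂, hP₂𝓑⟩ :=
    h.exists_isCommonPartner_or_two_partners hB₂ hB₁ hD hx
  · exact hy.imp fun _ => IsCommonPartner.symm
  rw [symmDiff_comm] at hP₂ hx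
  obtain ⟨y, hy⟩ := inter_nonempty_of_card_lt_card_add_card hP₁ hP₂
    (by rw [card_erase_of_mem hx, symmDiff_comm, hD]; omega)
  rw [mem_inter] at hy
  obtain ⟨hyx, hyD⟩ := mem_erase.1 (hP₁ hy.1)
  exact ⟨y, hyD, hyx, hP₁𝓑 y hy.1, hP₂𝓑 y hy.2⟩

theorem exists_isCommonPartner_of_five_le_card (h : SymmetricExchange 𝓑)
    (hB₁ : B₁ ∈ 𝓑) (hB₂ : B₂ ∈ 𝓑)
    (IH : ∀ C₁ ∈ 𝓑, ∀ C₂ ∈ 𝓑, #(C₁ ∆ C₂) < #(B₁ ∆ B₂) →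
      ∀ y ∈ C₁ ∆ C₂, ∃ z, IsCommonPartner 𝓑 C₁ C₂ y z)
    (h5 : 5 ≤ #(B₁ ∆ B₂)) (hx : x ∈ B₁ ∆ B₂) : ∃ y, IsCommonPartner 𝓑 B₁ B₂ x y := by
  obtain hy | ⟨v, hv, t, ht, hvx, htx, htv, hv𝓑, ht𝓑⟩ :=
    h.exists_isCommonPartner_or_exchange hB₁ hB₂ hx
  · exact hy
  obtain hy | ⟨-, s, hs, hsx, hsv, hs₁, hs₂⟩ :=
    exists_isCommonPartner_or_of_exchange hB₁ hB₂ IH h5 hx hv ht hvx htx htv hv𝓑 ht𝓑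
  · exact hy
  obtain hy | ⟨hs₂', -⟩ :=
    exists_isCommonPartner_or_of_exchange hB₁ hB₂ IH h5 hx hv hs hvx hsx hsv hv𝓑 hs₂
  · exact hy
  exact ⟨s, hs, hsx, hs₁, hs₂'⟩

theorem exists_isCommonPartner (h : SymmetricExchange 𝓑) (hB₁ : B₁ ∈ 𝓑) (hB₂ : B₂ ∈ 𝓑)
    (hx : x ∈ B₁ ∆ B₂) : ∃ y, IsCommonPartner 𝓑 B₁ B₂ x y := by
  induction hD : #(B₁ ∆ B₂) using Nat.strong_induction_on generalizing B₁ B₂ x with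
  | _ d IH =>
  have hpos : 0 < #(B₁ ∆ B₂) := card_pos.2 ⟨x, hx⟩
  obtain ⟨k, hk⟩ := h.even_card_symmDiff hB₁ hB₂
  obtain h2 | h4 | h5 : #(B₁ ∆ B₂) = 2 ∨ #(B₁ ∆ B₂) = 4 ∨ 5 ≤ #(B₁ ∆ B₂) := by omega
  · exact exists_isCommonPartner_of_card_eq_two hB₁ hB₂ h2 hx
  · exact h.exists_isCommonPartner_of_card_eq_four hB₁ hB₂ h4 hx
  · exact h.exists_isCommonPartner_of_five_le_card hB₁ hB₂
      (fun C₁ hC₁ C₂ hC₂ hlt y hy => IH _ (hD ▸ hlt) hC₁ hC₂ hy rfl) h5 hx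

end SymmetricExchange

end Exchange

theorem orthogonal_matroid_strong_symmetric_exchange {n : ℕ} (𝓑 : Set (Finset (Fin n)))
    (h𝓑 : IsOrthogonalMatroid 𝓑) :
    ∀ B₁ ∈ 𝓑, ∀ B₂ ∈ 𝓑, ∀ x₁ ∈ B₁ ∆ B₂,
      ∃ x₂ ∈ B₁ ∆ B₂, x₂ ≠ x₁ ∧ B₁ ∆ ({x₁, x₂} : Finset (Fin n)) ∈ 𝓑 ∧
        B₂ ∆ ({x₁, x₂} : Finset (Fin n)) ∈ 𝓑 :=
  fun _ hB₁ _ hB₂ _ hx => SymmetricExchange.exists_isCommonPartner h𝓑.2 hB₁ hB₂ hx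
end

section
/- Let R be a commutative ring, let p : 2^{[n]} → R be a function on the subsets of [n] satisfying all Wick equations, and let T ⊆ [n]. Then the function q defined by q(J) = p(J Δ T) also satisfies all Wick equations. -/
open Finset
open scoped symmDiff

/-- The Wick equation for `p` indexed by the pair `J₁, J₂`: writing
`J₁ ∆ J₂ = {i₁ < i₂ < ⋯ < i_k}`, it reads
`Σ_{j=1}^{k} (−1)^j · p(J₁ ∆ {i_j}) · p(J₂ ∆ {i_j}) = 0`.
(The exponent `((J₁ ∆ J₂).filter (· ≤ i)).card` is the position `j` of `i` in `J₁ ∆ J₂`.) -/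
def WickEq {R : Type*} [CommRing R] {n : ℕ} (p : Finset (Fin n) → R)
    (J₁ J₂ : Finset (Fin n)) : Prop :=
  ∑ i ∈ J₁ ∆ J₂,
      (-1 : R) ^ ((J₁ ∆ J₂).filter (fun a => a ≤ i)).card *
        p (J₁ ∆ {i}) * p (J₂ ∆ {i}) = 0

/-- `p` satisfies all Wick equations. -/
def SatisfiesWick {R : Type*} [CommRing R] {n : ℕ} (p : Finset (Fin n) → R) : Prop :=
  ∀ J₁ J₂ : Finset (Fin n), WickEq p J₁ J₂

/-- `p` satisfies all 4-term Wick equations. -/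
def SatisfiesWick4 {R : Type*} [CommRing R] {n : ℕ} (p : Finset (Fin n) → R) : Prop :=
  ∀ J₁ J₂ : Finset (Fin n), (J₁ ∆ J₂).card = 4 → WickEq p J₁ J₂

lemma wickEq_twist_iff {R : Type*} [CommRing R] {n : ℕ} (p : Finset (Fin n) → R)
    (T J₁ J₂ : Finset (Fin n)) :
    WickEq (fun J => p (J ∆ T)) J₁ J₂ ↔ WickEq p (J₁ ∆ T) (J₂ ∆ T) := by
  have hdiff : (J₁ ∆ T) ∆ (J₂ ∆ T) = J₁ ∆ J₂ := by
    rw [symmDiff_symmDiff_symmDiff_comm, symmDiff_self, symmDiff_bot]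
  simp only [WickEq, hdiff, symmDiff_right_comm _ T]

theorem twist_satisfies_wick {R : Type*} [CommRing R] {n : ℕ}
    (p : Finset (Fin n) → R) (hp : SatisfiesWick p) (T : Finset (Fin n)) :
    SatisfiesWick (fun J => p (J ∆ T)) :=
  fun J₁ J₂ => (wickEq_twist_iff p T J₁ J₂).2 (hp _ _)
end

section
/- Let P = (G, R) be a partial field and let p : 2^{[n]} → G ∪ {0} be a function on the subsets of [n], not identically zero, satisfying all Wick equations (as equations in R). Then the support Supp(p) = {J ⊆ [n] : p(J) ≠ 0} is an orthogonal matroid on [n]. -/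
open Finset
open scoped symmDiff

/-!
If `x₁ ∈ B₁ ∆ B₂` and no exchange `B₁ ∆ {x₁, x₂}` lies in the support, consider the Wick
equation indexed by `B₁ ∆ {x₁}` and `B₂ ∆ {x₁}`. Their symmetric difference is again `B₁ ∆ B₂`,
and the term at `i ≠ x₁` contains the factor `p (B₁ ∆ {x₁, i}) = 0`, so the equation collapses to
`± p B₁ * p B₂ = 0`. In a partial field nonzero values are units, hence `B₁` or `B₂` is not in
the support.
-/

theorem PFElem.isUnit {R : Type*} [CommRing R] {G : Subgroup Rˣ} {a : R} (ha : PFElem G a)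
    (ha₀ : a ≠ 0) : IsUnit a := by
  obtain h | ⟨u, -, rfl⟩ := ha
  · exact absurd h ha₀
  · exact u.isUnit

theorem Finset.symmDiff_singleton_symmDiff_singleton {α : Type*} [DecidableEq α]
    (B : Finset α) {x y : α} (hxy : x ≠ y) : B ∆ {x} ∆ {y} = B ∆ {x, y} := by
  rw [symmDiff_assoc, (Finset.disjoint_singleton.2 hxy).symmDiff_eq_sup]
  rfl

theorem WickEq.mul_eq_zero_of_forall_exchange_eq_zero {R : Type*} [CommRing R] {n : ℕ}
    {p : Finset (Fin n) → R} {B₁ B₂ : Finset (Fin n)} {x : Fin n}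
    (hwick : WickEq p (B₁ ∆ {x}) (B₂ ∆ {x})) (hx : x ∈ B₁ ∆ B₂)
    (hexch : ∀ y ∈ B₁ ∆ B₂, y ≠ x → p (B₁ ∆ {x, y}) = 0) :
    p B₁ * p B₂ = 0 := by
  have hdiff : B₁ ∆ {x} ∆ (B₂ ∆ {x}) = B₁ ∆ B₂ := by
    rw [symmDiff_symmDiff_symmDiff_comm, symmDiff_self, symmDiff_bot]
  rw [WickEq, hdiff, Finset.sum_eq_single_of_mem x hx fun y hy hyx => by
    rw [symmDiff_singleton_symmDiff_singleton _ hyx.symm, hexch y hy hyx, mul_zero, zero_mul],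
    symmDiff_symmDiff_cancel_right, symmDiff_symmDiff_cancel_right, mul_assoc] at hwick
  exact ((isUnit_one.neg.pow _).mul_right_eq_zero).1 hwick

theorem support_of_wick_vector_is_orthogonal_matroid_general {R : Type*} [CommRing R]
    (G : Subgroup Rˣ) {n : ℕ}
    (p : Finset (Fin n) → R)
    (hval : ∀ J : Finset (Fin n), PFElem G (p J))
    (hne : ∃ J : Finset (Fin n), p J ≠ 0)
    (hp : SatisfiesWick p) :
    IsOrthogonalMatroid {J : Finset (Fin n) | p J ≠ 0} := by
  obtain ⟨J₀, hJ₀⟩ := hne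
  have : Nontrivial R := nontrivial_of_ne _ _ hJ₀
  refine ⟨⟨J₀, hJ₀⟩, fun B₁ hB₁ B₂ hB₂ x hx => ?_⟩
  by_contra! hfail
  have hunit : IsUnit (p B₁ * p B₂) := ((hval B₁).isUnit hB₁).mul ((hval B₂).isUnit hB₂)
  refine hunit.ne_zero ((hp _ _).mul_eq_zero_of_forall_exchange_eq_zero hx fun y hy hyx => ?_)
  simpa using hfail y hy hyx

theorem support_of_wick_vector_is_orthogonal_matroid {R : Type*} [CommRing R]
    (G : Subgroup Rˣ) (hG : (-1 : Rˣ) ∈ G) {n : ℕ}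
    (p : Finset (Fin n) → R)
    (hval : ∀ J : Finset (Fin n), PFElem G (p J))
    (hne : ∃ J : Finset (Fin n), p J ≠ 0)
    (hp : SatisfiesWick p) :
    IsOrthogonalMatroid {J : Finset (Fin n) | p J ≠ 0} :=
  support_of_wick_vector_is_orthogonal_matroid_general G p hval hne hp
end

section
/- Let c, d, N, m be positive integers and let f₁, …, f_N ∈ ℤ[x₁, …, x_m] be polynomials with deg(f_i) ≤ d and ‖f_i‖ ≤ c for all i, where ‖f‖ denotes the maximal absolute value of the coefficients of f. Let r be a positive integer satisfying r > C(Nd + m, m) · (log(3r) + N·log(c·(eN)^d)), where C(·,·) is the binomial coefficient, log is the logarithm to base 2, and e is Euler's number. Then the number of realizable sets of {f₁, …, f_N} is at most r. -/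
open Finset MvPolynomial

/-- `S ⊆ [N]` is realizable with respect to `f₁, …, f_N ∈ ℤ[x₁, …, x_m]` if there are a
field `k` and a vector `u ∈ k^m` such that `S = {i ∈ [N] : ψ_k(f_i)(u) ≠ 0}`. -/
def RealizableSet {N m : ℕ} (f : Fin N → MvPolynomial (Fin m) ℤ) (S : Finset (Fin N)) : Prop :=
  ∃ (k : Type) (fld : Field k),
    letI := fld
    ∃ u : Fin m → k,
      ∀ i : Fin N, i ∈ S ↔ MvPolynomial.eval u (MvPolynomial.map (Int.castRingHom k) (f i)) ≠ 0

/-!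
Enumerate the realizable sets `S₁, …, S_t` in colexicographic order, so that no `S_i` with
`i > j` is contained in `S_j`, and put `g_j = ∏_{i ∈ S_j} f_i`. A point realizing `S_j` gives a
ring homomorphism killing every `g_i` with `S_i ⊄ S_j` but not `g_j`, so `g_j` is not in the
`ℤ`-span of `g_{j+1}, …, g_t`. The coefficient vectors of the `g_j` lie in `ℤ^T`, where `T` is a
set of at most `C(Nd + m, m)` monomials, and their entries are at most `K = c^N N^{Nd}`.

Along the chain of lattices `Λ_j = span(g_j, …, g_t)`, the squared covolume (a Gram determinant,
hence a positive integer) either gets multiplied by at most `|g_j|² ≤ |T| K²` while the rank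
goes up by one, or gets divided by the square of an index `≥ 2` while the rank stays. Hence
`4^t ≤ (4 |T| K²)^{|T|}`, and the hypothesis on `r` turns this into `t < r`.
-/

theorem Finsupp.card_le_choose_of_degree_le {m D : ℕ} (T : Finset (Fin m →₀ ℕ))
    (hT : ∀ μ ∈ T, μ.degree ≤ D) : #T ≤ (D + m).choose m := by
  classical
  calc #T ≤ #((univ : Finset (Fin (m + 1))).finsuppAntidiag D) := by
        refine card_le_card_of_injOn (fun μ => Finsupp.cons (D - μ.degree) μ) (fun μ hμ => ?_)
          fun μ _ ν _ h => (Finsupp.cons_injective2 h).2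
        have hμD := hT μ hμ
        rw [mem_coe, mem_finsuppAntidiag, Fin.sum_univ_succ]
        simp only [Finsupp.cons_zero, Finsupp.cons_succ, ← Finsupp.degree_eq_sum]
        refine ⟨by omega, subset_univ _⟩
    _ = (D + m).choose m := by
        rw [card_finsuppAntidiag_nat_eq_choose, card_univ, Fintype.card_fin,
          show m + 1 + D - 1 = D + m by omega, Nat.choose_symm_add]

theorem Finsupp.card_toMultiset_eq_degree {σ : Type*} (μ : σ →₀ ℕ) :
    Multiset.card (Finsupp.toMultiset μ) = μ.degree :=
  Finsupp.card_toMultiset μ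

theorem Finsupp.sum_antidiagonal_pow_degree_le {σ R : Type*} [DecidableEq σ] [CommSemiring R]
    [PartialOrder R] [IsOrderedRing R] (μ : σ →₀ ℕ) {s : R} (hs : 0 ≤ s) :
    ∑ p ∈ antidiagonal μ, s ^ p.2.degree ≤ (1 + s) ^ μ.degree := by
  classical
  set M := Finsupp.toMultiset μ
  have hanti : antidiagonal μ =
      (M.antidiagonal.map (Prod.map Multiset.toFinsupp Multiset.toFinsupp)).toFinset :=
    Multiset.toFinsupp_support _
  calc ∑ p ∈ antidiagonal μ, s ^ p.2.degree
      ≤ ((M.antidiagonal.map (Prod.map Multiset.toFinsupp Multiset.toFinsupp)).map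
          fun p => s ^ p.2.degree).sum := by
        rw [hanti, Finset.sum_multiset_map_count]
        refine Finset.sum_le_sum fun p hp => ?_
        rw [nsmul_eq_mul]
        exact le_mul_of_one_le_left (pow_nonneg hs _)
          (Nat.cast_one.symm.trans_le (Nat.mono_cast
            (Multiset.one_le_count_iff_mem.mpr (Multiset.mem_toFinset.mp hp))))
    _ = (M.antidiagonal.map fun q =>
          (q.1.map fun _ => (1 : R)).prod * (q.2.map fun _ => s).prod).sum := by
        simp only [Multiset.map_map, Function.comp_def, Prod.map_snd, Multiset.map_const',
          Multiset.prod_replicate, one_pow, one_mul, ← card_toMultiset_eq_degree,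
          Multiset.toFinsupp_toMultiset]
    _ = (1 + s) ^ μ.degree := by
        rw [← Multiset.prod_map_add, Multiset.map_const', Multiset.prod_replicate,
          card_toMultiset_eq_degree]

theorem MvPolynomial.abs_coeff_prod_le {σ ι R : Type*} [CommRing R] [LinearOrder R]
    [IsStrictOrderedRing R] {f : ι → MvPolynomial σ R} {c : R}
    (hc : ∀ i μ, |(f i).coeff μ| ≤ c) (S : Finset ι) (μ : σ →₀ ℕ) :
    |(∏ i ∈ S, f i).coeff μ| ≤ c ^ #S * (#S : R) ^ μ.degree := by
  classical
  induction S using Finset.induction_on generalizing μ with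
  | empty =>
    rcases eq_or_ne μ 0 with rfl | hμ
    · simp
    · simp [coeff_one, hμ.symm]
  | @insert a S ha ih =>
    have hc0 : 0 ≤ c := (abs_nonneg _).trans (hc a 0)
    rw [prod_insert ha, coeff_mul, card_insert_of_notMem ha]
    calc |∑ p ∈ antidiagonal μ, (f a).coeff p.1 * (∏ i ∈ S, f i).coeff p.2|
        ≤ ∑ p ∈ antidiagonal μ, c * (c ^ #S * (#S : R) ^ p.2.degree) := by
          refine (abs_sum_le_sum_abs _ _).trans (sum_le_sum fun p _ => ?_)
          rw [abs_mul]
          exact mul_le_mul (hc a p.1) (ih p.2) (abs_nonneg _) hc0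
      _ = c ^ (#S + 1) * ∑ p ∈ antidiagonal μ, (#S : R) ^ p.2.degree := by
          rw [← mul_sum, ← mul_sum, pow_succ]; ring
      _ ≤ c ^ (#S + 1) * ((#S + 1 : ℕ) : R) ^ μ.degree := by
          gcongr
          push_cast
          rw [add_comm]
          exact Finsupp.sum_antidiagonal_pow_degree_le μ (Nat.cast_nonneg _)

theorem MvPolynomial.totalDegree_prod_le_of_le {σ ι R : Type*} [CommSemiring R]
    {f : ι → MvPolynomial σ R} {d : ℕ} (hdeg : ∀ i, (f i).totalDegree ≤ d) (S : Finset ι) :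
    (∏ i ∈ S, f i).totalDegree ≤ #S * d :=
  (totalDegree_finsetProd _ _).trans (sum_le_card_nsmul _ _ _ fun i _ => hdeg i)

theorem MvPolynomial.abs_coeff_prod_le_of_totalDegree_le {σ : Type*} {N c d : ℕ} (hc : 0 < c)
    (hN : 0 < N) {f : Fin N → MvPolynomial σ ℤ} (hdeg : ∀ i, (f i).totalDegree ≤ d)
    (hcoeff : ∀ i μ, |(f i).coeff μ| ≤ c) (S : Finset (Fin N)) (μ : σ →₀ ℕ) :
    |(∏ i ∈ S, f i).coeff μ| ≤ c ^ N * N ^ (N * d) := by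
  have hSN : #S ≤ N := by simpa using card_le_univ S
  by_cases hμ : μ ∈ (∏ i ∈ S, f i).support
  · have hμN : μ.degree ≤ N * d :=
      (le_totalDegree hμ).trans ((totalDegree_prod_le_of_le hdeg S).trans (by gcongr))
    refine (abs_coeff_prod_le hcoeff S μ).trans (mul_le_mul ?_ ?_ (by positivity) (by positivity))
    · exact pow_le_pow_right₀ (by exact_mod_cast hc) hSN
    · exact (pow_le_pow_left₀ (by positivity) (by exact_mod_cast hSN) _).trans
        (pow_le_pow_right₀ (by exact_mod_cast hN) hμN)
  · rw [notMem_support_iff.mp hμ, abs_zero]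
    positivity

open Matrix Module

section Gram

variable {κ ι : Type*} [Fintype κ] [DecidableEq κ] [Fintype ι]

def gramDet (A : Matrix κ ι ℤ) : ℤ := (A * Aᵀ).det

theorem gramDet_mul (P : Matrix κ κ ℤ) (A : Matrix κ ι ℤ) :
    gramDet (P * A) = P.det ^ 2 * gramDet A := by
  rw [gramDet, gramDet, transpose_mul, show P * A * (Aᵀ * Pᵀ) = P * (A * Aᵀ) * Pᵀ by
    simp only [Matrix.mul_assoc], det_mul, det_mul, det_transpose]
  ring

theorem gramDet_submatrix_equiv {κ' : Type*} [Fintype κ'] [DecidableEq κ'] (e : κ' ≃ κ)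
    (A : Matrix κ ι ℤ) : gramDet (A.submatrix e id) = gramDet A := by
  rw [gramDet, transpose_submatrix, ← submatrix_mul _ _ _ _ _ Function.bijective_id,
    det_submatrix_equiv_self, gramDet]

theorem cast_gramDet (A : Matrix κ ι ℤ) :
    (gramDet A : ℝ) = (A.map (Int.cast : ℤ → ℝ) * (A.map (Int.cast : ℤ → ℝ))ᴴ).det := by
  rw [gramDet, ← eq_intCast (Int.castRingHom ℝ), RingHom.map_det, RingHom.mapMatrix_apply,
    Matrix.map_mul, conjTranspose_eq_transpose_of_trivial, transpose_map]
  rfl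

theorem gramDet_nonneg (A : Matrix κ ι ℤ) : 0 ≤ gramDet A := by
  have := (posSemidef_self_mul_conjTranspose (A.map ((↑) : ℤ → ℝ))).det_nonneg
  rw [← cast_gramDet] at this
  exact_mod_cast this

theorem gramDet_pos {A : Matrix κ ι ℤ} (hA : LinearIndependent ℤ A.row) : 0 < gramDet A := by
  have hpd : (A * Aᴴ).PosDef := .mul_conjTranspose_self A (vecMul_injective_iff.mpr hA)
  refine (gramDet_nonneg A).lt_of_ne' fun h0 => ?_
  obtain ⟨x, hx, hAx⟩ := exists_mulVec_eq_zero_iff.mpr h0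
  simpa [conjTranspose_eq_transpose_of_trivial, hAx] using hpd.dotProduct_mulVec_pos hx

theorem Matrix.PosSemidef.det_fromBlocks_le {A : Matrix κ κ ℝ} (hA : A.PosSemidef)
    [Invertible A] (B : Matrix κ Unit ℝ) (d : ℝ) :
    (fromBlocks A B Bᴴ (of fun _ _ => d)).det ≤ A.det * d := by
  -- Schur complement: the determinant is `det A * (d - Bᴴ A⁻¹ B)`, and `A⁻¹` is psd
  have hschur : 0 ≤ (Bᴴ * A⁻¹ * B) () () :=
    (hA.inv.conjTranspose_mul_mul_same B).diag_nonneg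
  rw [det_fromBlocks₁₁, det_unique (n := Unit), invOf_eq_nonsing_inv]
  simp only [sub_apply, of_apply]
  exact mul_le_mul_of_nonneg_left (by linarith) hA.det_nonneg

theorem gramDet_fromRows_le {A : Matrix κ ι ℤ} (hA : gramDet A ≠ 0) (v : ι → ℤ) :
    gramDet (A.fromRows (replicateRow Unit v)) ≤ (v ⬝ᵥ v) * gramDet A := by
  set A' := A.map ((↑) : ℤ → ℝ)
  set v' : ι → ℝ := fun i => v i
  have hG : (A' * A'ᴴ).det ≠ 0 := by rw [← cast_gramDet]; exact_mod_cast hA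
  let _ := invertibleOfIsUnitDet _ (isUnit_iff_ne_zero.mpr hG)
  have key := (posSemidef_self_mul_conjTranspose A').det_fromBlocks_le
    (A' * (replicateRow Unit v')ᴴ) (v' ⬝ᵥ v')
  have hcast : ((A.fromRows (replicateRow Unit v)).map ((↑) : ℤ → ℝ)) =
      A'.fromRows (replicateRow Unit v') := by
    rw [fromRows_map]
    rfl
  have hblocks : fromBlocks (A' * A'ᴴ) (A' * (replicateRow Unit v')ᴴ)
      (A' * (replicateRow Unit v')ᴴ)ᴴ (of fun _ _ => v' ⬝ᵥ v') =
      A'.fromRows (replicateRow Unit v') * (A'.fromRows (replicateRow Unit v'))ᴴ := by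
    rw [conjTranspose_fromRows_eq_fromCols_conjTranspose, fromRows_mul_fromCols,
      conjTranspose_mul, conjTranspose_conjTranspose]
    congr 1
  rw [hblocks, ← hcast, ← cast_gramDet, ← cast_gramDet] at key
  have : (gramDet (A.fromRows (replicateRow Unit v)) : ℝ) ≤ ((v ⬝ᵥ v * gramDet A : ℤ) : ℝ) := by
    push_cast
    simpa [v', dotProduct, mul_comm] using key
  exact_mod_cast this

end Gram

theorem Int.four_le_sq_of_not_isUnit {z : ℤ} (h0 : z ≠ 0) (hu : ¬IsUnit z) : 4 ≤ z ^ 2 := by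
  rw [Int.isUnit_iff] at hu
  rcases (by omega : z ≤ -2 ∨ 2 ≤ z) with h | h <;> nlinarith

section Lattice

open Submodule

variable {ι κ : Type*} {Λ : Submodule ℤ (ι → ℤ)}

noncomputable def Module.Basis.rows (b : Basis κ ℤ Λ) : Matrix κ ι ℤ :=
  Matrix.of fun a => b a

theorem Module.Basis.rows_eq_mul [Fintype κ] (b₁ b₂ : Basis κ ℤ Λ) :
    b₂.rows = (b₁.toMatrix b₂)ᵀ * b₁.rows := by
  ext j μ
  have := congr_arg (fun x : Λ => (x : ι → ℤ) μ) (b₁.sum_toMatrix_smul_self b₂ j)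
  simp only [Submodule.coe_sum, Submodule.coe_smul, Finset.sum_apply, Pi.smul_apply,
    smul_eq_mul] at this
  simp [Basis.rows, Matrix.mul_apply, ← this]

theorem Module.Basis.span_range_coe (b : Basis κ ℤ Λ) :
    span ℤ (Set.range fun a => (b a : ι → ℤ)) = Λ := by
  rw [Set.range_comp', ← Λ.coe_subtype, ← map_span, b.span_eq, Submodule.map_top,
    range_subtype]

theorem exists_basis_sup_span_singleton (b : Basis κ ℤ Λ) {v : ι → ℤ}
    (hv : ∀ D : ℤ, D ≠ 0 → D • v ∉ Λ) :
    ∃ b' : Basis (κ ⊕ Unit) ℤ ↥(Λ ⊔ ℤ ∙ v),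
      b'.rows = b.rows.fromRows (replicateRow Unit v) := by
  set w : κ ⊕ Unit → ι → ℤ := Sum.elim (fun a => b a) fun _ => v
  have hb := b.span_range_coe
  have hv0 : v ≠ 0 := fun h => hv 1 one_ne_zero (by simp [h])
  have hdisj : Disjoint (span ℤ (Set.range fun a => (b a : ι → ℤ)))
      (span ℤ (Set.range fun _ : Unit => v)) := by
    rw [hb, Set.range_const, Submodule.disjoint_def]
    intro x hx hxv
    obtain ⟨D, rfl⟩ := Submodule.mem_span_singleton.mp hxv
    by_contra hD
    exact hv D (by rintro rfl; simp at hD) hx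
  have hw : LinearIndependent ℤ w :=
    (b.linearIndependent.map' Λ.subtype Λ.ker_subtype).sum_type
      (linearIndependent_unique_iff.mpr hv0) hdisj
  have hspan : span ℤ (Set.range w) = Λ ⊔ ℤ ∙ v := by
    rw [Set.Sum.elim_range, Submodule.span_union, hb, Set.range_const]
  refine ⟨(Basis.span hw).map (LinearEquiv.ofEq _ _ hspan), ?_⟩
  ext (a | a) μ <;> simp [Basis.rows, w, Basis.span_apply]

variable [Fintype ι]

/-- The squared covolume of a lattice `Λ ⊆ ℤ^ι`: the Gram determinant of any of its bases
(`covolSq_eq_gramDet`). -/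
noncomputable def covolSq (Λ : Submodule ℤ (ι → ℤ)) : ℤ :=
  letI := Classical.decEq (Free.ChooseBasisIndex ℤ Λ)
  gramDet (Free.chooseBasis ℤ Λ).rows

variable [Fintype κ] [DecidableEq κ]

theorem gramDet_rows_eq (b₁ b₂ : Basis κ ℤ Λ) : gramDet b₂.rows = gramDet b₁.rows := by
  have hunit : IsUnit (b₁.toMatrix b₂).det :=
    IsUnit.of_mul_eq_one (b₂.toMatrix b₁).det
      (by rw [← det_mul, Basis.toMatrix_mul_toMatrix_flip, det_one])
  rw [b₁.rows_eq_mul b₂, gramDet_mul, det_transpose, Int.isUnit_sq hunit, one_mul]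

theorem covolSq_eq_gramDet (b : Basis κ ℤ Λ) : covolSq Λ = gramDet b.rows := by
  classical
  set e := b.indexEquiv (Free.chooseBasis ℤ Λ)
  have : (b.reindex e).rows = b.rows.submatrix e.symm id := by
    ext; simp [Basis.rows]
  rw [← gramDet_submatrix_equiv e.symm, ← this, covolSq, gramDet_rows_eq]

theorem covolSq_pos (Λ : Submodule ℤ (ι → ℤ)) : 0 < covolSq Λ := by
  classical
  set b := Free.chooseBasis ℤ Λ
  rw [covolSq_eq_gramDet b]
  exact gramDet_pos (b.linearIndependent.map' Λ.subtype Λ.ker_subtype)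

theorem covolSq_bot : covolSq (⊥ : Submodule ℤ (ι → ℤ)) = 1 := by
  rw [covolSq_eq_gramDet (Basis.empty _ : Basis (Fin 0) ℤ _), gramDet, det_fin_zero]

variable {v : ι → ℤ}

theorem covolSq_sup_span_singleton_le (hv : ∀ D : ℤ, D ≠ 0 → D • v ∉ Λ) :
    covolSq (Λ ⊔ ℤ ∙ v) ≤ (v ⬝ᵥ v) * covolSq Λ := by
  classical
  set b := Free.chooseBasis ℤ Λ
  obtain ⟨b', hb'⟩ := exists_basis_sup_span_singleton b hv
  rw [covolSq_eq_gramDet b', covolSq_eq_gramDet b, hb']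
  exact gramDet_fromRows_le (covolSq_eq_gramDet b ▸ covolSq_pos Λ).ne' v

theorem finrank_sup_span_singleton (hv : ∀ D : ℤ, D ≠ 0 → D • v ∉ Λ) :
    finrank ℤ ↥(Λ ⊔ ℤ ∙ v) = finrank ℤ Λ + 1 := by
  set b := Free.chooseBasis ℤ Λ
  obtain ⟨b', -⟩ := exists_basis_sup_span_singleton b hv
  rw [finrank_eq_card_basis b', finrank_eq_card_basis b, Fintype.card_sum, Fintype.card_unit]

theorem finrank_sup_span_singleton_of_smul_mem {D : ℤ} (hD : D ≠ 0) (hv : D • v ∈ Λ) :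
    finrank ℤ ↥(Λ ⊔ ℤ ∙ v) = finrank ℤ Λ := by
  set φ : (ι → ℤ) →ₗ[ℤ] ι → ℤ := D • LinearMap.id
  have hφ : Function.Injective φ := fun x y h => smul_right_injective _ hD h
  have hmap : (Λ ⊔ ℤ ∙ v).map φ ≤ Λ :=
    map_le_iff_le_comap.mpr <| sup_le (fun x hx => Λ.smul_mem D hx)
      ((span_singleton_le_iff_mem _ _).mpr hv)
  refine le_antisymm ?_ (finrank_mono le_sup_left)
  calc finrank ℤ ↥(Λ ⊔ ℤ ∙ v) = finrank ℤ ↥((Λ ⊔ ℤ ∙ v).map φ) :=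
        (equivMapOfInjective φ hφ _).finrank_eq
    _ ≤ finrank ℤ Λ := finrank_mono hmap

theorem four_mul_covolSq_le_of_lt {Λ' : Submodule ℤ (ι → ℤ)} (hlt : Λ' < Λ)
    (hrank : finrank ℤ Λ' = finrank ℤ Λ) : 4 * covolSq Λ ≤ covolSq Λ' := by
  classical
  -- Smith normal form; equal ranks make it square: `bΛ' i = a i • bΛ i`
  obtain ⟨n, o, hno, bΛ, bΛ', a, ha⟩ :=
    exists_smith_normal_form_of_le (Pi.basisFun ℤ ι) Λ' Λ hlt.le
  obtain rfl : n = o := by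
    simpa [finrank_eq_card_basis bΛ', finrank_eq_card_basis bΛ] using hrank
  simp only [Fin.castLE_rfl, id] at ha
  have hrows : bΛ'.rows = diagonal a * bΛ.rows := by
    ext i μ
    simp [Basis.rows, ha]
  have hcov : covolSq Λ' = (∏ i, a i) ^ 2 * covolSq Λ := by
    rw [covolSq_eq_gramDet bΛ', covolSq_eq_gramDet bΛ, hrows, gramDet_mul, det_diagonal]
  have hnz : ∏ i, a i ≠ 0 := fun h => (covolSq_pos Λ').ne' (by simp [hcov, h])
  have hnu : ¬IsUnit (∏ i, a i) := by
    intro hu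
    refine hlt.not_ge ?_
    rw [← bΛ.span_range_coe, span_le]
    rintro _ ⟨i, rfl⟩
    have hai := Int.isUnit_sq (isUnit_of_dvd_unit (dvd_prod_of_mem a (mem_univ i)) hu)
    have hbΛ : (bΛ i : ι → ℤ) = a i • (bΛ' i : ι → ℤ) := by
      rw [ha, smul_smul, ← sq, hai, one_smul]
    change (bΛ i : ι → ℤ) ∈ Λ'
    rw [hbΛ]
    exact Λ'.smul_mem _ (bΛ' i).2
  rw [hcov]
  exact mul_le_mul_of_nonneg_right (Int.four_le_sq_of_not_isUnit hnz hnu)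
    (covolSq_pos Λ).le

theorem four_pow_mul_covolSq_span_le {t : ℕ} {Q : ℤ} (v : Fin t → ι → ℤ)
    (hQ : ∀ j, v j ⬝ᵥ v j ≤ Q) (hv : ∀ j, v j ∉ span ℤ (v '' Set.Ioi j)) :
    4 ^ t * covolSq (span ℤ (Set.range v)) ≤ (4 * Q) ^ finrank ℤ (span ℤ (Set.range v)) := by
  induction t with
  | zero => rw [Set.range_eq_empty v, span_empty, covolSq_bot, finrank_bot]; simp
  | succ t ih =>
    set Λ := span ℤ (Set.range (Fin.tail v))
    set w := v 0
    have hΛ : 4 ^ t * covolSq Λ ≤ (4 * Q) ^ finrank ℤ Λ := by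
      refine ih (Fin.tail v) (fun j => hQ _) fun j => ?_
      have : Fin.tail v '' Set.Ioi j = v '' Set.Ioi j.succ := by
        rw [← Fin.image_succ_Ioi, Set.image_image]
        rfl
      exact this ▸ hv j.succ
    have hw : w ∉ Λ := by
      have : Set.range (Fin.tail v) = v '' Set.Ioi 0 := by
        rw [show Fin.tail v = v ∘ Fin.succ from rfl, Set.range_comp, Fin.range_succ]
        congr 1
        ext i
        simp [Fin.pos_iff_ne_zero]
      simpa only [Λ, this] using hv 0
    have hspan : span ℤ (Set.range v) = Λ ⊔ ℤ ∙ w := by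
      conv_lhs => rw [← Fin.cons_self_tail v]
      rw [Fin.range_cons, span_insert, sup_comm]
    have hw0 : 0 ≤ w ⬝ᵥ w := Finset.sum_nonneg fun i _ => mul_self_nonneg _
    rw [hspan]
    -- either the rank stays and `Λ` has index `≥ 2` in `Λ ⊔ ℤ ∙ w`, or the rank grows by one
    by_cases htors : ∃ D : ℤ, D ≠ 0 ∧ D • w ∈ Λ
    · obtain ⟨D, hD, hDw⟩ := htors
      have hrank := finrank_sup_span_singleton_of_smul_mem hD hDw
      have hlt : Λ < Λ ⊔ ℤ ∙ w :=
        lt_of_le_of_ne le_sup_left fun h => hw (h ▸ mem_sup_right (mem_span_singleton_self w))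
      calc 4 ^ (t + 1) * covolSq (Λ ⊔ ℤ ∙ w) = 4 ^ t * (4 * covolSq (Λ ⊔ ℤ ∙ w)) := by ring
        _ ≤ 4 ^ t * covolSq Λ := by gcongr; exact four_mul_covolSq_le_of_lt hlt hrank.symm
        _ ≤ (4 * Q) ^ finrank ℤ ↥(Λ ⊔ ℤ ∙ w) := hrank ▸ hΛ
    · push Not at htors
      rw [finrank_sup_span_singleton htors, pow_succ (4 * Q)]
      calc 4 ^ (t + 1) * covolSq (Λ ⊔ ℤ ∙ w) ≤ 4 ^ (t + 1) * ((w ⬝ᵥ w) * covolSq Λ) := by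
            gcongr; exact covolSq_sup_span_singleton_le htors
        _ = (4 ^ t * covolSq Λ) * (4 * (w ⬝ᵥ w)) := by ring
        _ ≤ (4 * Q) ^ finrank ℤ Λ * (4 * Q) :=
            mul_le_mul hΛ (by linarith [hQ 0]) (by linarith) (pow_nonneg (by linarith [hQ 0]) _)

end Lattice

theorem MvPolynomial.four_pow_le_of_notMem_span {m D t : ℕ} {K : ℤ} (hK : 1 ≤ K)
    (g : Fin t → MvPolynomial (Fin m) ℤ) (hdeg : ∀ j, (g j).totalDegree ≤ D)
    (hcoeff : ∀ j μ, |(g j).coeff μ| ≤ K) (hg : ∀ j, g j ∉ Submodule.span ℤ (g '' Set.Ioi j)) :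
    4 ^ t ≤ (4 * ((D + m).choose m * K ^ 2)) ^ (D + m).choose m := by
  classical
  set T := univ.biUnion fun j => (g j).support
  have hsupp : ∀ j, (g j).support ⊆ T := fun j =>
    subset_biUnion_of_mem (fun j => (g j).support) (mem_univ j)
  have hT : #T ≤ (D + m).choose m := by
    refine Finsupp.card_le_choose_of_degree_le T fun μ hμ => ?_
    obtain ⟨j, -, hj⟩ := mem_biUnion.mp hμ
    exact (le_totalDegree hj).trans (hdeg j)
  set v : Fin t → T → ℤ := fun j μ => (g j).coeff μ
  set ofCoeffs : (T → ℤ) →ₗ[ℤ] MvPolynomial (Fin m) ℤ :=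
    Fintype.linearCombination ℤ fun μ : T => monomial (μ : Fin m →₀ ℕ) 1
  have hofCoeffs : ∀ j, ofCoeffs (v j) = g j := by
    intro j
    rw [Fintype.linearCombination_apply, sum_coe_sort T fun μ => (g j).coeff μ • monomial μ 1]
    conv_rhs => rw [(g j).as_sum]
    refine (sum_subset (hsupp j) fun μ _ hμ => ?_).symm.trans (sum_congr rfl fun μ _ => ?_)
    · simp [notMem_support_iff.mp hμ]
    · rw [smul_monomial, smul_eq_mul, mul_one]
  have hv : ∀ j, v j ∉ Submodule.span ℤ (v '' Set.Ioi j) := fun j h => hg j <| by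
    have := Submodule.mem_map_of_mem (f := ofCoeffs) h
    simpa only [Submodule.map_span, Set.image_image, hofCoeffs] using this
  have hQ : ∀ j, v j ⬝ᵥ v j ≤ #T * K ^ 2 := fun j =>
    calc v j ⬝ᵥ v j = ∑ μ, |v j μ| * |v j μ| := by simp [dotProduct, abs_mul_abs_self]
      _ ≤ ∑ _μ : T, K * K := by gcongr with μ; exacts [hcoeff j μ, hcoeff j μ]
      _ = #T * K ^ 2 := by simp [sq]
  have hrank : finrank ℤ (Submodule.span ℤ (Set.range v)) ≤ (D + m).choose m :=
    calc _ ≤ finrank ℤ (T → ℤ) := Submodule.finrank_le _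
      _ = #T := by simp
      _ ≤ _ := hT
  calc (4 : ℤ) ^ t ≤ 4 ^ t * covolSq (Submodule.span ℤ (Set.range v)) :=
        le_mul_of_one_le_right (by positivity) (covolSq_pos _)
    _ ≤ (4 * (#T * K ^ 2)) ^ finrank ℤ (Submodule.span ℤ (Set.range v)) :=
        four_pow_mul_covolSq_span_le v hQ hv
    _ ≤ (4 * ((D + m).choose m * K ^ 2)) ^ finrank ℤ (Submodule.span ℤ (Set.range v)) := by
        gcongr
    _ ≤ _ := by
        refine pow_le_pow_right₀ ?_ hrank
        have : (1 : ℤ) ≤ (D + m).choose m := by exact_mod_cast Nat.choose_pos (by omega)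
        nlinarith

theorem Finset.exists_fin_enum_not_subset {α : Type*} [LinearOrder α]
    (𝒮 : Finset (Finset α)) :
    ∃ e : Fin #𝒮 → Finset α, (∀ j, e j ∈ 𝒮) ∧ ∀ i j, j < i → ¬e i ⊆ e j := by
  set 𝒮' := 𝒮.image toColex
  have hcard : #𝒮' = #𝒮 := card_image_of_injective _ toColex.injective
  refine ⟨fun j => ofColex (𝒮'.orderEmbOfFin hcard j), fun j => ?_, fun i j hij hsub => ?_⟩
  · obtain ⟨a, ha, hae⟩ := mem_image.mp (𝒮'.orderEmbOfFin_mem hcard j)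
    simpa [← hae] using ha
  · exact ((𝒮'.orderEmbOfFin hcard).strictMono hij).not_ge
      (Colex.toColex_le_toColex_of_subset hsub)

theorem RealizableSet.prod_notMem_span {N m : ℕ} {f : Fin N → MvPolynomial (Fin m) ℤ}
    {S : Finset (Fin N)} (hS : RealizableSet f S) {𝒯 : Set (Finset (Fin N))}
    (h𝒯 : ∀ T ∈ 𝒯, ¬T ⊆ S) :
    ∏ i ∈ S, f i ∉ Submodule.span ℤ ((fun T => ∏ i ∈ T, f i) '' 𝒯) := by
  obtain ⟨k, _, u, hu⟩ := hS
  set φ := ((eval u).comp (map (Int.castRingHom k))).toIntAlgHom.toLinearMap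
  have hφ : ∀ T : Finset (Fin N), φ (∏ i ∈ T, f i) ≠ 0 ↔ T ⊆ S := fun T => by
    simp [φ, map_prod, prod_ne_zero_iff, subset_iff, hu]
  intro hmem
  have hker : Submodule.span ℤ ((fun T => ∏ i ∈ T, f i) '' 𝒯) ≤ LinearMap.ker φ :=
    Submodule.span_le.mpr <| Set.image_subset_iff.mpr fun T hT => by
      simpa using mt (hφ T).mp (h𝒯 T hT)
  exact (hφ S).mpr subset_rfl (hker hmem)

theorem le_mul_logb_of_four_pow_le {t B : ℕ} {X : ℝ} (hX : 0 < X)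
    (ht : (4 : ℝ) ^ t ≤ (X ^ 2) ^ B) :
    (t : ℝ) ≤ B * Real.logb 2 X := by
  have h2 : (2 : ℝ) ^ t ≤ X ^ B := by
    refine (pow_le_pow_iff_left₀ (by positivity) (by positivity) two_ne_zero).mp ?_
    calc ((2 : ℝ) ^ t) ^ 2 = 4 ^ t := by rw [← pow_mul, mul_comm, pow_mul]; norm_num
      _ ≤ (X ^ 2) ^ B := ht
      _ = (X ^ B) ^ 2 := by rw [← pow_mul, ← pow_mul, mul_comm]
  rw [← Real.logb_pow, Real.le_logb_iff_rpow_le one_lt_two (by positivity)]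
  exact_mod_cast h2

theorem lt_of_four_pow_le_of_bound {c d N r t B : ℕ} (hc : 0 < c) (hN : 0 < N) (hr : 0 < r)
    (ht : (4 : ℤ) ^ t ≤ (4 * (B * ((c : ℤ) ^ N * N ^ (N * d)) ^ 2)) ^ B)
    (hbound : (B : ℝ) *
        (Real.logb 2 (3 * r) + N * Real.logb 2 (c * (Real.exp 1 * N) ^ d)) < r) :
    t < r := by
  -- `log₂ (3 r x^N)` is the bracket of `hbound`
  set x : ℝ := c * (Real.exp 1 * N) ^ d
  have hc1 : (1 : ℝ) ≤ c := by exact_mod_cast hc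
  have hN1 : (1 : ℝ) ≤ N := by exact_mod_cast hN
  have hr1 : (1 : ℝ) ≤ r := by exact_mod_cast hr
  have he1 : 1 ≤ Real.exp 1 := Real.one_le_exp zero_le_one
  have hx : 1 ≤ x :=
    one_le_mul_of_one_le_of_one_le hc1 (one_le_pow₀ (one_le_mul_of_one_le_of_one_le he1 hN1))
  have hBr : (B : ℝ) ≤ r := by
    have h3r : 1 ≤ Real.logb 2 (3 * r) := by
      rw [Real.le_logb_iff_rpow_le one_lt_two (by positivity)]
      norm_num; linarith
    have hlogx := Real.logb_nonneg one_lt_two hx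
    refine le_trans ?_ hbound.le
    exact le_mul_of_one_le_right (Nat.cast_nonneg B) (by nlinarith)
  have hK : (c : ℝ) ^ N * N ^ (N * d) ≤ x ^ N := by
    simp only [x, mul_pow, ← pow_mul]
    rw [mul_comm d N]
    gcongr
    exact le_mul_of_one_le_left (by positivity) (one_le_pow₀ he1)
  have hX : (4 : ℝ) ^ t ≤ ((3 * r * x ^ N) ^ 2) ^ B := by
    have h4 : (4 : ℝ) ^ t ≤ (4 * (B * ((c : ℝ) ^ N * N ^ (N * d)) ^ 2)) ^ B := by
      exact_mod_cast ht
    refine h4.trans (pow_le_pow_left₀ (by positivity) ?_ B)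
    calc 4 * (B * ((c : ℝ) ^ N * N ^ (N * d)) ^ 2) ≤ 4 * (r * (x ^ N) ^ 2) := by gcongr
      _ ≤ (3 * r * x ^ N) ^ 2 := by nlinarith [sq_nonneg (x ^ N)]
  have := le_mul_logb_of_four_pow_le (by positivity) hX
  rw [Real.logb_mul (by positivity) (by positivity), Real.logb_pow] at this
  exact_mod_cast this.trans_lt hbound

theorem nelson_zero_patterns_general (c d N m : ℕ) (hc : 0 < c) (hN : 0 < N)
    (f : Fin N → MvPolynomial (Fin m) ℤ)
    (hdeg : ∀ i : Fin N, (f i).totalDegree ≤ d)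
    (hcoeff : ∀ (i : Fin N) (mono : Fin m →₀ ℕ), |(f i).coeff mono| ≤ (c : ℤ))
    (r : ℕ) (hr : 0 < r)
    (hbound : ((N * d + m).choose m : ℝ) *
        (Real.logb 2 (3 * r) + (N : ℝ) * Real.logb 2 ((c : ℝ) * (Real.exp 1 * N) ^ d)) <
      (r : ℝ)) :
    Set.ncard {S : Finset (Fin N) | RealizableSet f S} ≤ r := by
  classical
  set 𝒮 := {S : Finset (Fin N) | RealizableSet f S}.toFinite.toFinset
  obtain ⟨S, hS𝒮, hSsub⟩ := 𝒮.exists_fin_enum_not_subset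
  set g := fun j => ∏ i ∈ S j, f i
  have hsep : ∀ j, g j ∉ Submodule.span ℤ (g '' Set.Ioi j) := fun j => by
    rw [← Set.image_image (fun T => ∏ i ∈ T, f i) S]
    exact RealizableSet.prod_notMem_span (by simpa [𝒮] using hS𝒮 j)
      (by rintro _ ⟨i, hi, rfl⟩; exact hSsub i j hi)
  have hK : (1 : ℤ) ≤ c ^ N * N ^ (N * d) := one_le_mul_of_one_le_of_one_le
    (one_le_pow₀ (by exact_mod_cast hc)) (one_le_pow₀ (by exact_mod_cast hN))
  have hgdeg : ∀ j, (g j).totalDegree ≤ N * d := fun j =>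
    (totalDegree_prod_le_of_le hdeg (S j)).trans (by gcongr; simpa using card_le_univ (S j))
  have h4 := four_pow_le_of_notMem_span hK g hgdeg
    (fun j => abs_coeff_prod_le_of_totalDegree_le hc hN hdeg hcoeff (S j)) hsep
  rw [Set.ncard_eq_toFinset_card _ (Set.toFinite _)]
  exact (lt_of_four_pow_le_of_bound hc hN hr h4 hbound).le

/-- Nelson's theorem on zero patterns of integer polynomials. -/
theorem nelson_zero_patterns (c d N m : ℕ) (hc : 0 < c) (hd : 0 < d) (hN : 0 < N) (hm : 0 < m)
    (f : Fin N → MvPolynomial (Fin m) ℤ)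
    (hdeg : ∀ i : Fin N, (f i).totalDegree ≤ d)
    (hcoeff : ∀ (i : Fin N) (mono : Fin m →₀ ℕ), |(f i).coeff mono| ≤ (c : ℤ))
    (r : ℕ) (hr : 0 < r)
    (hbound : ((N * d + m).choose m : ℝ) *
        (Real.logb 2 (3 * r) + (N : ℝ) * Real.logb 2 ((c : ℝ) * (Real.exp 1 * N) ^ d)) <
      (r : ℝ)) :
    Set.ncard {S : Finset (Fin N) | RealizableSet f S} ≤ r :=
  nelson_zero_patterns_general c d N m hc hN f hdeg hcoeff r hr hbound
end
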